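/- For 1 < β < 2, the infinite series ∑_{k=0}^{∞} ω_k^{(β)} converges to 0, and for every integer N > 1 the partial sum ∑_{k=0}^{N} ω_k^{(β)} is strictly negative. -/
import Mathlib

noncomputable def grunwaldG (β : ℝ) (k : ℕ) : ℝ :=
  (-1 : ℝ) ^ k * (∏ i ∈ Finset.range k, (β - i)) / (Nat.factorial k)

lemma grunwaldG_zero (β : ℝ) : grunwaldG β 0 = 1 := by simp [grunwaldG]

lemma grunwaldG_succ (β : ℝ) (n : ℕ) :
    grunwaldG β (n + 1) = grunwaldG β n * ((n - β) / (n + 1)) := by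
  unfold grunwaldG
  rw [Finset.prod_range_succ, pow_succ, Nat.factorial_succ]
  have h1 : ((Nat.factorial n : ℝ)) ≠ 0 := by positivity
  have h2 : ((n : ℝ) + 1) ≠ 0 := by positivity
  push_cast
  field_simp
  ring

lemma grunwaldG_shift (β : ℝ) (n : ℕ) :
    grunwaldG β (n + 1) = (-β / (n + 1)) * grunwaldG (β - 1) n := by
  unfold grunwaldG
  rw [Finset.prod_range_succ', pow_succ', Nat.factorial_succ]
  have h1 : ((Nat.factorial n : ℝ)) ≠ 0 := by positivity
  have h2 : ((n : ℝ) + 1) ≠ 0 := by positivity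
  have h3 : ∏ i ∈ Finset.range n, (β - ↑(i + 1)) = ∏ i ∈ Finset.range n, (β - 1 - ↑i) := by
    apply Finset.prod_congr rfl
    intro i _
    push_cast; ring
  rw [h3]
  push_cast
  field_simp
  ring

lemma sumg (β : ℝ) (n : ℕ) :
    ∑ k ∈ Finset.range (n + 1), grunwaldG β k = grunwaldG (β - 1) n := by
  induction n with
  | zero => simp [grunwaldG]
  | succ n ih =>
    rw [Finset.sum_range_succ, ih, grunwaldG_shift, grunwaldG_succ]
    have h2 : ((n : ℝ) + 1) ≠ 0 := by positivity
    field_simp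
    ring

lemma Hneg (β : ℝ) (hβ : 1 < β) (hβ' : β < 2) (n : ℕ) (hn : 1 ≤ n) :
    grunwaldG (β - 1) n < 0 := by
  induction n with
  | zero => omega
  | succ n ih =>
    rcases Nat.eq_zero_or_pos n with h | h
    · subst h
      rw [grunwaldG_succ, grunwaldG_zero]
      push_cast
      nlinarith
    · have hn' := ih h
      rw [grunwaldG_succ]
      have : (0:ℝ) < ((n : ℝ) - (β - 1)) / ((n:ℝ) + 1) := by
        have : (1:ℝ) ≤ (n:ℝ) := by exact_mod_cast h
        apply div_pos <;> nlinarith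
      nlinarith

lemma Hbound (β : ℝ) (hβ : 1 < β) (hβ' : β < 2) (n : ℕ) (hn : 1 ≤ n) :
    -((β - 1) / n) ≤ grunwaldG (β - 1) n := by
  induction n with
  | zero => omega
  | succ n ih =>
    rcases Nat.eq_zero_or_pos n with h | h
    · subst h
      rw [grunwaldG_succ, grunwaldG_zero]
      push_cast
      norm_num
    · have hn' := ih h
      have h1 : (1:ℝ) ≤ (n:ℝ) := by exact_mod_cast h
      rw [grunwaldG_succ]
      have hq : (0:ℝ) < ((n : ℝ) - (β - 1)) / ((n:ℝ) + 1) := by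
        apply div_pos <;> nlinarith
      have hq2 : ((n : ℝ) - (β - 1)) / ((n:ℝ) + 1) ≤ (n:ℝ) / ((n:ℝ)+1) := by
        apply div_le_div_of_nonneg_right ?_ (by nlinarith)
        · nlinarith
      have hHneg := Hneg β hβ hβ' n h
      -- grunwaldG (β-1) n * q ≥ -((β-1)/n) * (n/(n+1)) = -(β-1)/(n+1)
      have : grunwaldG (β-1) n * (((n : ℝ) - (β - 1)) / ((n:ℝ) + 1))
          ≥ (-((β - 1) / n)) * ((n:ℝ) / ((n:ℝ)+1)) := by
        have := mul_le_mul_of_nonpos_left hq2 (le_of_lt hHneg)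
        nlinarith [mul_le_mul_of_nonneg_right hn' (le_of_lt hq)]
      have heq : (-((β - 1) / (n:ℝ))) * ((n:ℝ) / ((n:ℝ)+1)) = -((β-1)/((n:ℝ)+1)) := by
        field_simp
      push_cast
      linarith [heq ▸ this]

lemma Htendsto (β : ℝ) (hβ : 1 < β) (hβ' : β < 2) :
    Filter.Tendsto (fun n : ℕ => grunwaldG (β - 1) n) Filter.atTop (nhds 0) := by
  have hb : Filter.Tendsto (fun n : ℕ => -((β - 1) / (n:ℝ))) Filter.atTop (nhds 0) := by
    have := tendsto_const_div_atTop_nhds_zero_nat (β - 1)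
    simpa using this.neg
  have h0 : Filter.Tendsto (fun _ : ℕ => (0:ℝ)) Filter.atTop (nhds 0) := tendsto_const_nhds
  refine tendsto_of_tendsto_of_tendsto_of_le_of_le' hb h0 ?_ ?_
  · filter_upwards [Filter.eventually_ge_atTop 1] with n hn
    exact Hbound β hβ hβ' n hn
  · filter_upwards [Filter.eventually_ge_atTop 1] with n hn
    exact le_of_lt (Hneg β hβ hβ' n hn)

lemma g_nonneg (β : ℝ) (hβ : 1 < β) (hβ' : β < 2) (k : ℕ) :
    0 ≤ grunwaldG β (k + 2) := by
  induction k with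
  | zero =>
    rw [grunwaldG_succ, grunwaldG_succ, grunwaldG_zero]
    push_cast
    nlinarith
  | succ k ih =>
    rw [grunwaldG_succ]
    have h1 : (0:ℝ) ≤ ((k:ℝ) + 2 - β) / ((k:ℝ) + 2 + 1) := by
      apply div_nonneg <;> [nlinarith; positivity]
    push_cast
    push_cast at ih
    nlinarith

lemma g_one (β : ℝ) : grunwaldG β 1 = -β := by
  rw [show (1:ℕ) = 0 + 1 from rfl, grunwaldG_succ, grunwaldG_zero]
  norm_num

lemma sum_shift2 (β : ℝ) (m : ℕ) :
    ∑ j ∈ Finset.range m, grunwaldG β (j + 2)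
      = grunwaldG (β - 1) (m + 1) - grunwaldG β 0 - grunwaldG β 1 := by
  have h : ∑ k ∈ Finset.range (m + 2), grunwaldG β k
      = (∑ j ∈ Finset.range m, grunwaldG β (j + 2)) + grunwaldG β 1 + grunwaldG β 0 := by
    rw [Finset.sum_range_succ']
    congr 1
    rw [Finset.sum_range_succ']
  rw [show m + 2 = (m + 1) + 1 from rfl, sumg] at h
  linarith

lemma g_hasSum (β : ℝ) (hβ : 1 < β) (hβ' : β < 2) : HasSum (grunwaldG β) 0 := by
  have habs : Summable fun k => |grunwaldG β k| := by
    apply summable_of_sum_range_le (c := 2 * β + 1) (fun n => abs_nonneg _)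
    intro n
    match n with
    | 0 => simp; nlinarith
    | 1 => simp [grunwaldG_zero]; nlinarith
    | (m + 2) =>
      rw [Finset.sum_range_succ']
      rw [Finset.sum_range_succ']
      have e1 : ∀ j ∈ Finset.range m, |grunwaldG β (j + 1 + 1)| = grunwaldG β (j + 2) := by
        intro j _
        exact abs_of_nonneg (g_nonneg β hβ hβ' j)
      rw [Finset.sum_congr rfl e1, sum_shift2, grunwaldG_zero, g_one]
      have hH : grunwaldG (β - 1) (m + 1) < 0 := Hneg β hβ hβ' (m + 1) (by omega)
      rw [abs_of_nonpos (by nlinarith : -β ≤ 0), abs_of_nonneg (by norm_num : (0:ℝ) ≤ 1)]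
      nlinarith
  have hsum : Summable (grunwaldG β) := habs.of_abs
  have h1 := hsum.hasSum
  have h2 := h1.tendsto_sum_nat
  have h3 : Filter.Tendsto (fun n : ℕ => ∑ k ∈ Finset.range (n + 1), grunwaldG β k)
      Filter.atTop (nhds (∑' k, grunwaldG β k)) :=
    h2.comp (Filter.tendsto_add_atTop_nat 1)
  have h4 : Filter.Tendsto (fun n : ℕ => ∑ k ∈ Finset.range (n + 1), grunwaldG β k)
      Filter.atTop (nhds 0) := by
    simp only [sumg]
    exact Htendsto β hβ hβ'
  rwa [tendsto_nhds_unique h3 h4] at h1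

noncomputable def lam1 (β : ℝ) : ℝ := (β ^ 2 + 3 * β + 2) / 12
noncomputable def lam0 (β : ℝ) : ℝ := (4 - β ^ 2) / 6
noncomputable def lamm1 (β : ℝ) : ℝ := (β ^ 2 - 3 * β + 2) / 12

/-- The weights `ω_k^{(β)}`. -/
noncomputable def omegaW (β : ℝ) : ℕ → ℝ
  | 0 => lam1 β * grunwaldG β 0
  | 1 => lam1 β * grunwaldG β 1 + lam0 β * grunwaldG β 0
  | (k + 2) => lam1 β * grunwaldG β (k + 2) + lam0 β * grunwaldG β (k + 1)
      + lamm1 β * grunwaldG β k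

noncomputable def shift1 (β : ℝ) : ℕ → ℝ
  | 0 => 0
  | (k + 1) => grunwaldG β k

noncomputable def shift2 (β : ℝ) : ℕ → ℝ
  | 0 => 0
  | 1 => 0
  | (k + 2) => grunwaldG β k

lemma shift1_hasSum (β : ℝ) (hβ : 1 < β) (hβ' : β < 2) : HasSum (shift1 β) 0 := by
  have h := g_hasSum β hβ hβ'
  have h2 : HasSum (fun n => shift1 β (n + 1)) 0 := h
  rw [hasSum_nat_add_iff 1] at h2
  simpa [shift1] using h2

lemma shift2_hasSum (β : ℝ) (hβ : 1 < β) (hβ' : β < 2) : HasSum (shift2 β) 0 := by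
  have h := g_hasSum β hβ hβ'
  have h2 : HasSum (fun n => shift2 β (n + 2)) 0 := h
  rw [hasSum_nat_add_iff 2] at h2
  simpa [shift2, Finset.sum_range_succ] using h2

lemma omega_hasSum (β : ℝ) (hβ : 1 < β) (hβ' : β < 2) :
    HasSum (fun k : ℕ => omegaW β k) 0 := by
  have h := ((g_hasSum β hβ hβ').mul_left (lam1 β)).add
    (((shift1_hasSum β hβ hβ').mul_left (lam0 β)).add
      ((shift2_hasSum β hβ hβ').mul_left (lamm1 β)))
  simp only [mul_zero, add_zero] at h
  have he : (fun k : ℕ => omegaW β k) = fun k =>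
      lam1 β * grunwaldG β k + (lam0 β * shift1 β k + lamm1 β * shift2 β k) := by
    funext k
    match k with
    | 0 => simp [omegaW, shift1, shift2]
    | 1 => simp [omegaW, shift1, shift2]
    | (k + 2) => simp only [omegaW, shift1, shift2]; ring
  rw [he]
  exact h

lemma sum_omega (β : ℝ) (m : ℕ) :
    ∑ k ∈ Finset.range (m + 3), omegaW β k
      = lam1 β * grunwaldG (β - 1) (m + 2) + lam0 β * grunwaldG (β - 1) (m + 1)
        + lamm1 β * grunwaldG (β - 1) m := by
  have hsplit : ∑ k ∈ Finset.range (m + 3), omegaW β k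
      = (∑ j ∈ Finset.range (m + 1), omegaW β (j + 2)) + omegaW β 1 + omegaW β 0 := by
    rw [Finset.sum_range_succ']
    congr 1
    rw [Finset.sum_range_succ']
  rw [hsplit]
  have e : ∀ j ∈ Finset.range (m + 1), omegaW β (j + 2)
      = lam1 β * grunwaldG β (j + 2) + lam0 β * grunwaldG β (j + 1)
        + lamm1 β * grunwaldG β j := fun j _ => rfl
  rw [Finset.sum_congr rfl e]
  simp only [Finset.sum_add_distrib, ← Finset.mul_sum]
  have h1 := sum_shift2 β (m + 1)
  have h2 : ∑ j ∈ Finset.range (m + 1), grunwaldG β (j + 1)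
      = grunwaldG (β - 1) (m + 1) - grunwaldG β 0 := by
    have hs := sumg β (m + 1)
    rw [Finset.sum_range_succ'] at hs
    linarith
  have h3 : ∑ j ∈ Finset.range (m + 1), grunwaldG β j = grunwaldG (β - 1) m := sumg β m
  rw [h1, h2, h3]
  have o0 : omegaW β 0 = lam1 β * grunwaldG β 0 := rfl
  have o1 : omegaW β 1 = lam1 β * grunwaldG β 1 + lam0 β * grunwaldG β 0 := rfl
  rw [o0, o1]
  ring

lemma omega_sum_neg (β : ℝ) (hβ : 1 < β) (hβ' : β < 2) :
    ∀ N : ℕ, 1 < N → ∑ k ∈ Finset.range (N + 1), omegaW β k < 0 := by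
  intro N hN
  obtain ⟨m, rfl⟩ : ∃ m, N = m + 2 := ⟨N - 2, by omega⟩
  rw [show m + 2 + 1 = m + 3 from rfl, sum_omega]
  have hl1 : 0 < lam1 β := by unfold lam1; nlinarith
  have hl0 : 0 < lam0 β := by unfold lam0; nlinarith
  have hlm : lamm1 β < 0 := by unfold lamm1; nlinarith
  match m with
  | 0 =>
    rw [show (0:ℕ) + 2 = 1 + 1 from rfl, grunwaldG_succ, show (0:ℕ) + 1 = 0 + 1 from rfl,
      grunwaldG_succ, grunwaldG_zero]
    push_cast
    unfold lam1 lam0 lamm1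
    nlinarith [mul_pos (sub_pos.mpr hβ) (sub_pos.mpr hβ'),
      mul_pos (mul_pos (sub_pos.mpr hβ) (sub_pos.mpr hβ')) (sub_pos.mpr hβ'),
      sq_nonneg (β - 1), sq_nonneg (2 - β)]
  | (p + 1) =>
    rw [show p + 1 + 2 = (p + 2) + 1 from rfl, grunwaldG_succ,
      show p + 2 = (p + 1) + 1 from rfl, grunwaldG_succ]
    have hH : grunwaldG (β - 1) (p + 1) < 0 := Hneg β hβ hβ' (p + 1) (by omega)
    set H := grunwaldG (β - 1) (p + 1) with hHdef
    push_cast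
    set r : ℝ := (p : ℝ) with hrdef
    have hr : 0 ≤ r := Nat.cast_nonneg p
    have d1 : (0:ℝ) < r + 2 := by linarith
    have d2 : (0:ℝ) < r + 3 := by linarith
    have key : 0 < lam1 β * ((r + 1 - (β - 1)) / (r + 1 + 1)) * ((r + 1 + 1 - (β - 1)) / (r + 1 + 1 + 1))
        + lam0 β * ((r + 1 - (β - 1)) / (r + 1 + 1)) + lamm1 β := by
      have poly : 0 < lam1 β * (r + 2 - β) * (r + 3 - β)
          + lam0 β * (r + 2 - β) * (r + 3) + lamm1 β * (r + 2) * (r + 3) := by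
        unfold lam1 lam0 lamm1
        nlinarith [sq_nonneg (r + 2 - β), sq_nonneg (β - 1), sq_nonneg (2 - β), sq_nonneg r,
          mul_pos (sub_pos.mpr hβ) (sub_pos.mpr hβ'), mul_nonneg hr (sub_pos.mpr hβ').le,
          mul_nonneg hr hr, mul_nonneg (mul_nonneg hr hr) hr,
          mul_nonneg (mul_nonneg hr hr) (sub_pos.mpr hβ').le,
          mul_nonneg hr (mul_nonneg (sub_pos.mpr hβ).le (sub_pos.mpr hβ').le)]
      have heq : lam1 β * ((r + 1 - (β - 1)) / (r + 1 + 1)) * ((r + 1 + 1 - (β - 1)) / (r + 1 + 1 + 1))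
          + lam0 β * ((r + 1 - (β - 1)) / (r + 1 + 1)) + lamm1 β
          = (lam1 β * (r + 2 - β) * (r + 3 - β) + lam0 β * (r + 2 - β) * (r + 3)
            + lamm1 β * (r + 2) * (r + 3)) / ((r + 2) * (r + 3)) := by
        field_simp
        ring
      rw [heq]
      exact div_pos poly (by positivity)
    have hfin : lam1 β * (H * ((r + 1 - (β - 1)) / (r + 1 + 1)) * ((r + 1 + 1 - (β - 1)) / (r + 1 + 1 + 1)))
        + lam0 β * (H * ((r + 1 - (β - 1)) / (r + 1 + 1))) + lamm1 β * H
        = H * (lam1 β * ((r + 1 - (β - 1)) / (r + 1 + 1)) * ((r + 1 + 1 - (β - 1)) / (r + 1 + 1 + 1))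
          + lam0 β * ((r + 1 - (β - 1)) / (r + 1 + 1)) + lamm1 β) := by ring
    calc lam1 β * (H * ((r + 1 - (β - 1)) / (r + 1 + 1)) * ((r + 1 + 1 - (β - 1)) / (r + 1 + 1 + 1)))
        + lam0 β * (H * ((r + 1 - (β - 1)) / (r + 1 + 1))) + lamm1 β * H
        = H * (lam1 β * ((r + 1 - (β - 1)) / (r + 1 + 1)) * ((r + 1 + 1 - (β - 1)) / (r + 1 + 1 + 1))
          + lam0 β * ((r + 1 - (β - 1)) / (r + 1 + 1)) + lamm1 β) := hfin
      _ < 0 := mul_neg_of_neg_of_pos hH key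

theorem stmt8 (β : ℝ) (hβ : 1 < β) (hβ' : β < 2) :
    HasSum (fun k : ℕ => omegaW β k) 0 ∧
    ∀ N : ℕ, 1 < N → ∑ k ∈ Finset.range (N + 1), omegaW β k < 0 :=
  ⟨omega_hasSum β hβ hβ', omega_sum_neg β hβ hβ'⟩
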